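/- In the group G = ⟨a,b,c,t | ac=ca, bc=cb, act=tac, bct=tbc⟩ with this generating set, for every n ≥ 1 the elements aⁿb⁻ⁿ and taⁿb⁻ⁿ⁺¹ both have word length 2n. -/

import Mathlib

/-!
The words `aⁿ b⁻ⁿ` and `t aⁿ b⁻⁽ⁿ⁻¹⁾` have length `2n`. They are geodesic because the
homomorphism `G → ℤ` with `a, t ↦ 1`, `b ↦ -1`, `c ↦ 0` changes by at most `1` per letter and
takes the value `2n` on both elements.
-/

/-- The word length of `g` with respect to a generating set `S`: the least `n`
such that `g` is a product of `n` elements of `S ∪ S⁻¹`. -/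
noncomputable def wordLength {G : Type*} [Group G] (S : Set G) (g : G) : ℕ :=
  sInf {n | ∃ l : List G, l.length = n ∧ (∀ x ∈ l, x ∈ S ∨ x⁻¹ ∈ S) ∧ l.prod = g}

/-- Relators of ⟨a,b,c,t | ac=ca, bc=cb, act=tac, bct=tbc⟩, with
a = 0, b = 1, c = 2, t = 3. -/
def grels : Set (FreeGroup (Fin 4)) :=
  { FreeGroup.of 0 * FreeGroup.of 2 * (FreeGroup.of 2 * FreeGroup.of 0)⁻¹,
    FreeGroup.of 1 * FreeGroup.of 2 * (FreeGroup.of 2 * FreeGroup.of 1)⁻¹,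
    FreeGroup.of 0 * FreeGroup.of 2 * FreeGroup.of 3 *
      (FreeGroup.of 3 * FreeGroup.of 0 * FreeGroup.of 2)⁻¹,
    FreeGroup.of 1 * FreeGroup.of 2 * FreeGroup.of 3 *
      (FreeGroup.of 3 * FreeGroup.of 1 * FreeGroup.of 2)⁻¹ }

/-- The group G = ⟨a,b,c,t | ac=ca, bc=cb, act=tac, bct=tbc⟩ ≅ F₂ × F₂. -/
abbrev G : Type := PresentedGroup grels

/-- The generator a of G. -/
def ga : G := PresentedGroup.of 0
/-- The generator b of G. -/
def gb : G := PresentedGroup.of 1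
/-- The generator c of G. -/
def gc : G := PresentedGroup.of 2
/-- The generator t of G. -/
def gt : G := PresentedGroup.of 3

/-- The generating set S₂ = {a, b, c, t} of G. -/
def SG : Set G := {ga, gb, gc, gt}

section WordLength

variable {G : Type*} [Group G] {S : Set G}

theorem wordLength_le_length {l : List G} (hl : ∀ x ∈ l, x ∈ S ∨ x⁻¹ ∈ S) :
    wordLength S l.prod ≤ l.length :=
  Nat.sInf_le ⟨l, rfl, hl, rfl⟩

theorem abs_toAdd_prod_le_length (χ : G →* Multiplicative ℤ)
    (hχ : ∀ s ∈ S, |(χ s).toAdd| ≤ 1) {l : List G} (hl : ∀ x ∈ l, x ∈ S ∨ x⁻¹ ∈ S) :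
    |(χ l.prod).toAdd| ≤ l.length := by
  induction l with
  | nil => simp
  | cons x l ih =>
    have hx : |(χ x).toAdd| ≤ 1 := by
      rcases hl x List.mem_cons_self with h | h
      · exact hχ x h
      · simpa using hχ _ h
    have hrest := ih fun y hy => hl y (List.mem_cons_of_mem x hy)
    calc |(χ (x :: l).prod).toAdd| = |(χ x).toAdd + (χ l.prod).toAdd| := by simp
      _ ≤ |(χ x).toAdd| + |(χ l.prod).toAdd| := abs_add_le _ _
      _ ≤ ((x :: l).length : ℤ) := by push_cast [List.length_cons]; linarith

theorem wordLength_eq_length (χ : G →* Multiplicative ℤ)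
    (hχ : ∀ s ∈ S, |(χ s).toAdd| ≤ 1) {l : List G} (hl : ∀ x ∈ l, x ∈ S ∨ x⁻¹ ∈ S)
    (hlen : (l.length : ℤ) ≤ |(χ l.prod).toAdd|) :
    wordLength S l.prod = l.length := by
  refine (wordLength_le_length hl).antisymm ?_
  obtain ⟨l', hlen', hl', hprod'⟩ := Nat.sInf_mem (s := {n | ∃ l' : List G, l'.length = n ∧
    (∀ x ∈ l', x ∈ S ∨ x⁻¹ ∈ S) ∧ l'.prod = l.prod}) ⟨_, l, rfl, hl, rfl⟩
  have := abs_toAdd_prod_le_length χ hχ hl'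
  rw [hprod', hlen'] at this
  exact_mod_cast hlen.trans this

theorem letters_replicate_append_replicate_inv {x y : G} (hx : x ∈ S) (hy : y ∈ S)
    (m k : ℕ) : ∀ z ∈ List.replicate m x ++ List.replicate k y⁻¹, z ∈ S ∨ z⁻¹ ∈ S := by
  intro z hz
  rcases List.mem_append.1 hz with h | h
  · exact .inl (List.eq_of_mem_replicate h ▸ hx)
  · exact .inr (by rw [List.eq_of_mem_replicate h, inv_inv]; exact hy)

theorem prod_replicate_append_replicate_inv (x y : G) (m k : ℕ) :
    (List.replicate m x ++ List.replicate k y⁻¹).prod = x ^ m * y ^ (-(k : ℤ)) := by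
  simp [List.prod_replicate, zpow_neg]

end WordLength

/-- Well defined because every relator has exponent sum zero in each generator. -/
noncomputable def expSum : G →* Multiplicative ℤ :=
  PresentedGroup.toGroup (f := ![.ofAdd 1, .ofAdd (-1), 1, .ofAdd 1]) <| by
    rintro r (rfl | rfl | rfl | rfl) <;> simp [mul_comm]

theorem abs_expSum_le_one : ∀ s ∈ SG, |(expSum s).toAdd| ≤ 1 := by
  rintro s (rfl | rfl | rfl | rfl) <;>
    simp [expSum, ga, gb, gc, gt, PresentedGroup.toGroup.of]

theorem expSum_ga : expSum ga = .ofAdd 1 := PresentedGroup.toGroup.of _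
theorem expSum_gb : expSum gb = .ofAdd (-1) := PresentedGroup.toGroup.of _
theorem expSum_gt : expSum gt = .ofAdd 1 := PresentedGroup.toGroup.of _

theorem ga_mem_SG : ga ∈ SG := by simp [SG]
theorem gb_mem_SG : gb ∈ SG := by simp [SG]
theorem gt_mem_SG : gt ∈ SG := by simp [SG]

/-- In (G, {a,b,c,t}), for every n ≥ 1 the elements aⁿb⁻ⁿ and taⁿb⁻ⁿ⁺¹ both
have word length 2n. -/
theorem stmt8 (n : ℕ) (hn : 1 ≤ n) :
    wordLength SG (ga ^ n * gb ^ (-(n : ℤ))) = 2 * n ∧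
    wordLength SG (gt * ga ^ n * gb ^ (1 - (n : ℤ))) = 2 * n := by
  have hword := letters_replicate_append_replicate_inv ga_mem_SG gb_mem_SG
  have hword' := List.forall_mem_cons.2 ⟨.inl gt_mem_SG, hword n (n - 1)⟩
  have hprod₁ := prod_replicate_append_replicate_inv ga gb n n
  have hprod₂ : (gt :: (List.replicate n ga ++ List.replicate (n - 1) gb⁻¹)).prod =
      gt * ga ^ n * gb ^ (1 - (n : ℤ)) := by
    rw [List.prod_cons, prod_replicate_append_replicate_inv, mul_assoc]
    congr 3
    omega
  constructor
  · rw [← hprod₁, wordLength_eq_length expSum abs_expSum_le_one (hword n n)]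
    · simp [two_mul]
    · simp only [hprod₁, map_mul, map_pow, map_zpow, expSum_ga, expSum_gb]
      refine le_abs.2 (.inl ?_)
      simp
  · rw [← hprod₂, wordLength_eq_length expSum abs_expSum_le_one hword']
    · simp
      omega
    · simp only [hprod₂, map_mul, map_pow, map_zpow, expSum_ga, expSum_gb, expSum_gt]
      refine le_abs.2 (.inl ?_)
      simp
      omega
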